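/- arXiv:1705.03498 — 3 statements merged into one kernel-verified Lean document; each statement's English description precedes it below -/
import Mathlib

section
/- If G is a group and G' ≤ G is a finite index subgroup, then G is LERF if and only if G' is LERF. -/
/-- A subgroup `H` of a group `G` is *separable* in `G` if for every `g ∈ G` with `g ∉ H`
there exists a finite index subgroup `G'` of `G` with `H ≤ G'` and `g ∉ G'`. -/
def Subgroup.IsSeparable {G : Type*} [Group G] (H : Subgroup G) : Prop :=
  ∀ g : G, g ∉ H → ∃ G' : Subgroup G, G'.FiniteIndex ∧ H ≤ G' ∧ g ∉ G'

/-- A group is *LERF* if all of its finitely generated subgroups are separable. -/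
def Group.LERF (G : Type*) [Group G] : Prop :=
  ∀ H : Subgroup G, H.FG → H.IsSeparable

/-! Separability descends to subgroups by intersecting. Conversely, for a finitely generated
`H ≤ G` the subgroup `G' ⊓ H` has finite index in `H`, so it is finitely generated (Schreier) and
separable in `G'`, hence in `G`. A subgroup `H` containing a separable `K` with finite index is
separable: given `g ∉ H` and representatives `hᵢ` of `H / K`, separate each `hᵢ⁻¹ g` from `K` by
a finite index `Mᵢ`; the normal core `N` of `⋂ Mᵢ` yields the finite index subgroup `H N ∌ g`. -/

namespace Subgroup

variable {G : Type*} [Group G]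

theorem FG.map {N : Type*} [Group N] {H : Subgroup G} (hH : H.FG) (f : G →* N) :
    (H.map f).FG := by
  have := (Group.fg_iff_subgroup_fg H).mpr hH
  exact (Group.fg_iff_subgroup_fg _).mp (Group.fg_of_surjective (f.subgroupMap_surjective H))

theorem FG.subgroupOf {K G' : Subgroup G} (hK : K.FG) (hle : K ≤ G') : (K.subgroupOf G').FG := by
  have := (Group.fg_iff_subgroup_fg K).mpr hK
  exact (Group.fg_iff_subgroup_fg _).mp <|
    Group.fg_of_surjective (f := (subgroupOfEquivOfLe hle).symm.toMonoidHom)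
      (subgroupOfEquivOfLe hle).symm.surjective

theorem FG.inf_of_finiteIndex {H : Subgroup G} (hH : H.FG) (G' : Subgroup G) [G'.FiniteIndex] :
    (G' ⊓ H).FG := by
  have := (Group.fg_iff_subgroup_fg H).mpr hH
  have hfg : (G'.subgroupOf H).FG := (Group.fg_iff_subgroup_fg _).mp inferInstance
  simpa only [subgroupOf_map_subtype] using hfg.map H.subtype

theorem IsSeparable.of_map_subtype {G' : Subgroup G} {H : Subgroup G'}
    (hH : (H.map G'.subtype).IsSeparable) : H.IsSeparable := by
  intro g hg
  obtain ⟨M, hM, hHM, hgM⟩ := hH g ((mem_map_iff_mem G'.subtype_injective).not.mpr hg)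
  exact ⟨M.subgroupOf G', inferInstance, fun x hx => hHM (mem_map_of_mem _ hx), hgM⟩

theorem IsSeparable.map_subtype {G' : Subgroup G} [hG' : G'.FiniteIndex] {H : Subgroup G'}
    (hH : H.IsSeparable) : (H.map G'.subtype).IsSeparable := by
  intro g hg
  by_cases hgG' : g ∈ G'
  · obtain ⟨M, hM, hHM, hgM⟩ :=
      hH ⟨g, hgG'⟩ fun h => hg ((mem_map_iff_mem G'.subtype_injective).mpr h)
    refine ⟨M.map G'.subtype, ⟨?_⟩, map_mono hHM,
      (mem_map_iff_mem G'.subtype_injective).not.mpr hgM⟩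
    rw [index_map_subtype]
    exact mul_ne_zero hM.index_ne_zero hG'.index_ne_zero
  · exact ⟨G', hG', map_subtype_le H, hgG'⟩

theorem IsSeparable.exists_normal_finiteIndex {K : Subgroup G} (hK : K.IsSeparable) {s : Set G}
    (hs : s.Finite) (hsK : ∀ x ∈ s, x ∉ K) :
    ∃ N : Subgroup G, N.Normal ∧ N.FiniteIndex ∧ ∀ x ∈ s, x ∉ K ⊔ N := by
  choose M hM hKM hxM using fun x : s => hK x (hsK x x.2)
  have := hs.to_subtype
  have := finiteIndex_iInf hM
  refine ⟨(⨅ x, M x).normalCore, normalCore_normal _, inferInstance, fun x hx hxN => ?_⟩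
  refine hxM ⟨x, hx⟩ (sup_le (hKM _) ?_ hxN)
  exact (normalCore_le _).trans (iInf_le _ _)

theorem IsSeparable.of_le_of_finiteIndex {K H : Subgroup G} (hK : K.IsSeparable) (hKH : K ≤ H)
    [(K.subgroupOf H).FiniteIndex] : H.IsSeparable := by
  intro g hg
  let rep : H ⧸ K.subgroupOf H → G := fun q => q.out
  have hrep (a : G) (ha : a ∈ H) : ∃ q, (rep q)⁻¹ * a ∈ K := by
    obtain ⟨k, hk⟩ := QuotientGroup.mk_out_eq_mul (K.subgroupOf H) ⟨a, ha⟩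
    refine ⟨QuotientGroup.mk ⟨a, ha⟩, ?_⟩
    simpa [rep, hk] using K.inv_mem k.2
  obtain ⟨N, hN, hNfin, hgN⟩ := hK.exists_normal_finiteIndex
    (Set.finite_range fun q => (rep q)⁻¹ * g) (by
      rintro _ ⟨q, rfl⟩ hq
      exact hg (by simpa [rep] using H.mul_mem (q.out).2 (hKH hq)))
  refine ⟨H ⊔ N, finiteIndex_of_le le_sup_right, le_sup_left, fun hgHN => ?_⟩
  obtain ⟨a, ha, n, hn, rfl⟩ := mem_sup_of_normal_right.mp hgHN
  obtain ⟨q, hq⟩ := hrep a ha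
  refine hgN ((rep q)⁻¹ * (a * n)) ⟨q, rfl⟩ ?_
  rw [← mul_assoc]
  exact mul_mem_sup hq hn

end Subgroup

namespace Group.LERF

variable {G : Type*} [Group G]

theorem subgroup (hG : LERF G) (G' : Subgroup G) : LERF G' :=
  fun _ hH => (hG _ (hH.map G'.subtype)).of_map_subtype

theorem of_finiteIndex {G' : Subgroup G} [G'.FiniteIndex] (hG' : LERF G') : LERF G := by
  intro H hH
  have hK : (G' ⊓ H).IsSeparable := by
    have := (hG' _ ((hH.inf_of_finiteIndex G').subgroupOf inf_le_left)).map_subtype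
    rwa [Subgroup.subgroupOf_map_subtype, inf_of_le_left inf_le_left] at this
  have : ((G' ⊓ H).subgroupOf H).FiniteIndex := by
    rw [Subgroup.inf_subgroupOf_right]; infer_instance
  exact hK.of_le_of_finiteIndex inf_le_right

end Group.LERF

/-- For a finite index subgroup `G' ≤ G`, the group `G` is LERF iff `G'` is LERF. -/
theorem lerf_iff_lerf_of_finiteIndex {G : Type*} [Group G] (G' : Subgroup G)
    (h : G'.FiniteIndex) : Group.LERF G ↔ Group.LERF G' :=
  ⟨fun hG => hG.subgroup G', fun hG' => hG'.of_finiteIndex⟩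
end

section
/- Let G₁, G₂ be groups with a common subgroup A (via injections i₁, i₂) and let α : G₁ *_A G₂ → ℤ be induced by α₁ : G₁ → ℤ and α₂ : G₂ → ℤ with α₁ ∘ i₁ = α₂ ∘ i₂. If the common restriction α₁ ∘ i₁ : A → ℤ is surjective, then the kernel of α is generated by ker(α₁) ∪ ker(α₂) (viewed inside the amalgam); moreover ker α is isomorphic to the amalgamated product ker(α₁) *_K ker(α₂) where K = ker(α₁ ∘ i₁) ≤ A. -/
open Monoid

set_option linter.unusedSectionVars false

open Monoid

namespace KerAmalgamAux

variable {ι : Type*} {A : Type*} [Group A] {G : ι → Type*} [∀ i, Group (G i)]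
  (φ : ∀ i, A →* G i) (α : ∀ i, G i →* Multiplicative ℤ) (β : A →* Multiplicative ℤ)

variable (hc : ∀ i, (α i).comp (φ i) = β)

/-- Conjugation by `φ i g` on `ker (α i)`. -/
def ckG (g : A) (i : ι) : MonoidHom.ker (α i) →* MonoidHom.ker (α i) :=
  MonoidHom.codRestrict ((MulAut.conj (φ i g)).toMonoidHom.comp (MonoidHom.ker (α i)).subtype)
    (MonoidHom.ker (α i))
    (fun x => by
      have hx : α i (x : G i) = 1 := x.2
      simp [MonoidHom.mem_ker, MulAut.conj_apply, map_mul, map_inv, hx])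

@[simp] theorem ckG_coe (g : A) (i : ι) (x : MonoidHom.ker (α i)) :
    ((ckG φ α g i x : MonoidHom.ker (α i)) : G i) = φ i g * x.1 * (φ i g)⁻¹ := rfl

/-- Conjugation by `g` on `ker β`. -/
def ckA (g : A) : MonoidHom.ker β →* MonoidHom.ker β :=
  MonoidHom.codRestrict ((MulAut.conj g).toMonoidHom.comp (MonoidHom.ker β).subtype)
    (MonoidHom.ker β)
    (fun x => by
      have hx : β (x : A) = 1 := x.2
      simp [MonoidHom.mem_ker, MulAut.conj_apply, map_mul, map_inv, hx])

@[simp] theorem ckA_coe (g : A) (x : MonoidHom.ker β) :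
    ((ckA β g x : MonoidHom.ker β) : A) = g * x.1 * g⁻¹ := rfl


include hc

theorem alpha_phi (i : ι) (x : A) : α i (φ i x) = β x :=
  DFunLike.congr_fun (hc i) x

/-- The family of kernel inclusions `ker β →* ker (α i)`. -/
def kerFam : ∀ i, MonoidHom.ker β →* MonoidHom.ker (α i) := fun i =>
  MonoidHom.codRestrict ((φ i).comp (MonoidHom.ker β).subtype) (MonoidHom.ker (α i))
    (fun x => by
      have h := alpha_phi φ α β hc i x.1
      have hx : β x.1 = 1 := x.2
      simp only [MonoidHom.mem_ker, MonoidHom.comp_apply, Subgroup.coe_subtype]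
      rw [h]
      exact hx)

@[simp] theorem kerFam_coe (i : ι) (x : MonoidHom.ker β) :
    ((kerFam φ α β hc i x : MonoidHom.ker (α i)) : G i) = φ i x.1 := rfl

theorem ckG_kerFam (g : A) (i : ι) (x : MonoidHom.ker β) :
    ckG φ α g i (kerFam φ α β hc i x) = kerFam φ α β hc i (ckA β g x) := by
  apply Subtype.ext
  simp [map_mul]

/-- The conjugation automorphism of the kernel amalgam, as a hom. -/
def sigmaHom (g : A) : PushoutI (kerFam φ α β hc) →* PushoutI (kerFam φ α β hc) :=
  PushoutI.lift (fun i => (PushoutI.of i).comp (ckG φ α g i))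
    ((PushoutI.base _).comp (ckA β g))
    (fun i => by
      ext x
      simp only [MonoidHom.comp_apply, MonoidHom.coe_comp, Function.comp_apply]
      rw [ckG_kerFam φ α β hc, PushoutI.of_apply_eq_base])

@[simp] theorem sigmaHom_of (g : A) (i : ι) (x : MonoidHom.ker (α i)) :
    sigmaHom φ α β hc g (PushoutI.of i x) = PushoutI.of i (ckG φ α g i x) := by
  simp [sigmaHom, PushoutI.lift_of]

@[simp] theorem sigmaHom_base (g : A) (x : MonoidHom.ker β) :
    sigmaHom φ α β hc g (PushoutI.base _ x) = PushoutI.base _ (ckA β g x) := by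
  simp [sigmaHom, PushoutI.lift_base]

theorem sigmaHom_comp (g h : A) :
    (sigmaHom φ α β hc g).comp (sigmaHom φ α β hc h) = sigmaHom φ α β hc (g * h) := by
  apply PushoutI.hom_ext
  · intro i
    ext x
    simp only [MonoidHom.coe_comp, Function.comp_apply, sigmaHom_of]
    refine congrArg _ (Subtype.ext ?_)
    simp [map_mul, mul_assoc]
  · ext x
    simp only [MonoidHom.coe_comp, Function.comp_apply, sigmaHom_base]
    refine congrArg _ (Subtype.ext ?_)
    simp [mul_assoc]

theorem sigmaHom_one : sigmaHom φ α β hc 1 = MonoidHom.id _ := by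
  apply PushoutI.hom_ext
  · intro i
    ext x
    simp only [MonoidHom.coe_comp, Function.comp_apply, sigmaHom_of, MonoidHom.id_apply]
    refine congrArg _ (Subtype.ext ?_)
    simp
  · ext x
    simp only [MonoidHom.coe_comp, Function.comp_apply, sigmaHom_base, MonoidHom.id_apply]
    refine congrArg _ (Subtype.ext ?_)
    simp

/-- Conjugation as a homomorphism `A →* MulAut (PushoutI (kerFam ...))`. -/
def sigmaAut : A →* MulAut (PushoutI (kerFam φ α β hc)) where
  toFun g :=
    { toFun := sigmaHom φ α β hc g
      invFun := sigmaHom φ α β hc g⁻¹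
      left_inv := fun x => by
        rw [← MonoidHom.comp_apply, sigmaHom_comp, inv_mul_cancel, sigmaHom_one,
          MonoidHom.id_apply]
      right_inv := fun x => by
        rw [← MonoidHom.comp_apply, sigmaHom_comp, mul_inv_cancel, sigmaHom_one,
          MonoidHom.id_apply]
      map_mul' := map_mul _ }
  map_one' := by
    ext x
    simp only [MulEquiv.coe_mk, Equiv.coe_fn_mk]
    rw [sigmaHom_one]
    rfl
  map_mul' g h := by
    ext x
    simp only [MulEquiv.coe_mk, Equiv.coe_fn_mk, MulAut.mul_apply]
    rw [← sigmaHom_comp]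
    rfl

@[simp] theorem sigmaAut_apply (g : A) (x : PushoutI (kerFam φ α β hc)) :
    sigmaAut φ α β hc g x = sigmaHom φ α β hc g x := rfl


section SDP

theorem inl_mul_inr' {N G' : Type*} [Group N] [Group G'] (τ : G' →* MulAut N) (n : N) (g : G') :
    (SemidirectProduct.inl n * SemidirectProduct.inr g : N ⋊[τ] G') = ⟨n, g⟩ := by
  ext <;> simp

variable (t : A) (ht : β t = Multiplicative.ofAdd 1)

omit hc in
include ht in
theorem beta_t_zpow (n : ℤ) : β (t ^ n) = Multiplicative.ofAdd n := by
  rw [map_zpow, ht, ← ofAdd_zsmul, smul_eq_mul, mul_one]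

include ht in
theorem memkerG (i : ι) (g : G i) :
    g * φ i (t ^ (-(α i g).toAdd)) ∈ MonoidHom.ker (α i) := by
  rw [MonoidHom.mem_ker, map_mul, alpha_phi φ α β hc, beta_t_zpow (β := β) t ht]
  simp

include ht in
theorem memkerA (h : A) : h * t ^ (-(β h).toAdd) ∈ MonoidHom.ker β := by
  rw [MonoidHom.mem_ker, map_mul, beta_t_zpow (β := β) t ht]
  simp

/-- The `ℤ`-action on the kernel amalgam. -/
def act : Multiplicative ℤ →* MulAut (PushoutI (kerFam φ α β hc)) :=
  (sigmaAut φ α β hc).comp (zpowersHom A t)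

@[simp] theorem act_of (u : Multiplicative ℤ) (i : ι) (x : MonoidHom.ker (α i)) :
    act φ α β hc t u (PushoutI.of i x) = PushoutI.of i (ckG φ α (t ^ u.toAdd) i x) := by
  rw [show act φ α β hc t u = sigmaAut φ α β hc (t ^ u.toAdd) from rfl, sigmaAut_apply,
    sigmaHom_of]

@[simp] theorem act_base (u : Multiplicative ℤ) (x : MonoidHom.ker β) :
    act φ α β hc t u (PushoutI.base _ x) = PushoutI.base _ (ckA β (t ^ u.toAdd) x) := by
  rw [show act φ α β hc t u = sigmaAut φ α β hc (t ^ u.toAdd) from rfl, sigmaAut_apply,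
    sigmaHom_base]

/-- The map `G i →* (kernel amalgam) ⋊ ℤ`. -/
def phiSummand (i : ι) : G i →* PushoutI (kerFam φ α β hc) ⋊[act φ α β hc t] Multiplicative ℤ where
  toFun g := ⟨PushoutI.of i ⟨g * φ i (t ^ (-(α i g).toAdd)), memkerG φ α β hc t ht i g⟩, α i g⟩
  map_one' := by
    refine SemidirectProduct.ext ?_ ?_ <;> simp
    refine (congrArg _ (Subtype.ext ?_)).trans (map_one _)
    simp
  map_mul' g h := by
    have hv : (α i (g * h)).toAdd = (α i g).toAdd + (α i h).toAdd := by
      rw [map_mul, toAdd_mul]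
    refine SemidirectProduct.ext ?_ ?_
    · show PushoutI.of i _ = _
      simp only [SemidirectProduct.mul_left]
      rw [act_of φ α β hc t, ← map_mul]
      refine congrArg _ (Subtype.ext ?_)
      simp only [MulMemClass.coe_mul, ckG_coe]
      rw [hv]
      simp only [map_zpow]
      group
    · exact map_mul (α i) g h

@[simp] theorem phiSummand_right (i : ι) (g : G i) :
    (phiSummand φ α β hc t ht i g).right = α i g := rfl

theorem phiSummand_phi (i : ι) (h : A) :
    phiSummand φ α β hc t ht i (φ i h)
      = ⟨PushoutI.base _ ⟨h * t ^ (-(β h).toAdd), memkerA φ α β hc t ht h⟩, β h⟩ := by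
  refine SemidirectProduct.ext ?_ ?_
  swap
  · exact alpha_phi φ α β hc i h
  show PushoutI.of i _ = PushoutI.base _ _
  rw [← PushoutI.of_apply_eq_base _ i]
  refine congrArg _ (Subtype.ext ?_)
  simp only [kerFam_coe]
  rw [alpha_phi φ α β hc i h, map_mul, map_zpow]

variable [Nonempty ι]

/-- The decomposition map `PushoutI φ →* (kernel amalgam) ⋊ ℤ`. -/
noncomputable def bigPhi : PushoutI φ →* PushoutI (kerFam φ α β hc) ⋊[act φ α β hc t] Multiplicative ℤ :=
  PushoutI.lift (phiSummand φ α β hc t ht)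
    ((phiSummand φ α β hc t ht (Classical.arbitrary ι)).comp (φ (Classical.arbitrary ι)))
    (fun i => by
      refine MonoidHom.ext fun h => ?_
      simp only [MonoidHom.comp_apply]
      rw [phiSummand_phi, phiSummand_phi])

@[simp] theorem bigPhi_of (i : ι) (g : G i) :
    bigPhi φ α β hc t ht (PushoutI.of i g) = phiSummand φ α β hc t ht i g := by
  simp [bigPhi, PushoutI.lift_of]

theorem bigPhi_base (h : A) :
    bigPhi φ α β hc t ht (PushoutI.base φ h)
      = ⟨PushoutI.base _ ⟨h * t ^ (-(β h).toAdd), memkerA φ α β hc t ht h⟩, β h⟩ := by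
  have h1 : PushoutI.base φ h
      = PushoutI.of (Classical.arbitrary ι) (φ (Classical.arbitrary ι) h) :=
    (PushoutI.of_apply_eq_base φ (Classical.arbitrary ι) h).symm
  rw [h1, bigPhi_of, phiSummand_phi]

/-- The inclusion of the kernel amalgam into the big amalgam. -/
def eIncl : PushoutI (kerFam φ α β hc) →* PushoutI φ :=
  PushoutI.lift (fun i => (PushoutI.of i).comp (MonoidHom.ker (α i)).subtype)
    ((PushoutI.base φ).comp (MonoidHom.ker β).subtype)
    (fun i => by
      ext x
      simp only [MonoidHom.comp_apply]
      rw [show ((MonoidHom.ker (α i)).subtype (kerFam φ α β hc i x) : G i) = φ i x.1 from rfl]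
      exact PushoutI.of_apply_eq_base φ i x.1)

@[simp] theorem eIncl_of (i : ι) (x : MonoidHom.ker (α i)) :
    eIncl φ α β hc (PushoutI.of i x) = PushoutI.of i x.1 := by
  simp [eIncl, PushoutI.lift_of]

@[simp] theorem eIncl_base (x : MonoidHom.ker β) :
    eIncl φ α β hc (PushoutI.base _ x) = PushoutI.base φ x.1 := by
  simp [eIncl, PushoutI.lift_base]

/-- The inverse decomposition map. -/
noncomputable def bigTheta :
    (PushoutI (kerFam φ α β hc) ⋊[act φ α β hc t] Multiplicative ℤ) →* PushoutI φ :=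
  SemidirectProduct.lift (eIncl φ α β hc) (zpowersHom _ (PushoutI.base φ t))
    (fun u => by
      apply PushoutI.hom_ext
      · intro i
        refine MonoidHom.ext fun x => ?_
        simp only [MonoidHom.comp_apply, MulEquiv.coe_toMonoidHom, act_of φ α β hc t,
          eIncl_of, ckG_coe, MulAut.conj_apply, map_mul, map_inv, zpowersHom_apply]
        rw [PushoutI.of_apply_eq_base φ i (t ^ u.toAdd), map_zpow]
      · refine MonoidHom.ext fun x => ?_
        simp only [MonoidHom.comp_apply, MulEquiv.coe_toMonoidHom, act_base φ α β hc t,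
          eIncl_base, ckA_coe, MulAut.conj_apply, map_mul, map_inv, zpowersHom_apply]
        rw [map_zpow])

theorem bigTheta_comp_bigPhi :
    (bigTheta φ α β hc t).comp (bigPhi φ α β hc t ht) = MonoidHom.id _ := by
  apply PushoutI.hom_ext
  · intro i
    refine MonoidHom.ext fun g => ?_
    simp only [MonoidHom.comp_apply, MonoidHom.id_apply, bigPhi_of]
    show eIncl φ α β hc (PushoutI.of i _) * zpowersHom _ (PushoutI.base φ t) (α i g)
      = PushoutI.of i g
    rw [eIncl_of, zpowersHom_apply, ← map_zpow, ← PushoutI.of_apply_eq_base φ i, ← map_mul]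
    refine congrArg _ ?_
    simp only [map_zpow]
    group
  · refine MonoidHom.ext fun h => ?_
    simp only [MonoidHom.comp_apply, MonoidHom.id_apply]
    rw [bigPhi_base]
    show eIncl φ α β hc (PushoutI.base _ _) * zpowersHom _ (PushoutI.base φ t) (β h)
      = PushoutI.base φ h
    rw [eIncl_base, zpowersHom_apply, ← map_zpow, ← map_mul]
    refine congrArg _ ?_
    group

theorem bigPhi_comp_eIncl :
    (bigPhi φ α β hc t ht).comp (eIncl φ α β hc) = SemidirectProduct.inl := by
  apply PushoutI.hom_ext
  · intro i
    refine MonoidHom.ext fun x => ?_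
    simp only [MonoidHom.comp_apply, eIncl_of, bigPhi_of]
    refine SemidirectProduct.ext ?_ ?_
    · show PushoutI.of i _ = (SemidirectProduct.inl (PushoutI.of i x) : _ ⋊[act φ α β hc t] _).left
      rw [SemidirectProduct.left_inl]
      refine congrArg _ (Subtype.ext ?_)
      show x.1 * φ i (t ^ (-(α i x.1).toAdd)) = x.1
      rw [show α i x.1 = 1 from x.2]
      simp
    · show α i x.1 = (SemidirectProduct.inl (PushoutI.of i x) : _ ⋊[act φ α β hc t] _).right
      rw [SemidirectProduct.right_inl]
      exact x.2
  · refine MonoidHom.ext fun y => ?_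
    simp only [MonoidHom.comp_apply, eIncl_base]
    rw [bigPhi_base]
    refine SemidirectProduct.ext ?_ ?_
    · show PushoutI.base _ _ = (SemidirectProduct.inl (PushoutI.base _ y) : _ ⋊[act φ α β hc t] _).left
      rw [SemidirectProduct.left_inl]
      refine congrArg _ (Subtype.ext ?_)
      show y.1 * t ^ (-(β y.1).toAdd) = y.1
      rw [show β y.1 = 1 from y.2]
      simp
    · show β y.1 = (SemidirectProduct.inl (PushoutI.base _ y) : _ ⋊[act φ α β hc t] _).right
      rw [SemidirectProduct.right_inl]
      exact y.2

include ht in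
theorem eIncl_injective : Function.Injective (eIncl φ α β hc) := by
  intro x y hxy
  have h1 := DFunLike.congr_fun (bigPhi_comp_eIncl φ α β hc t ht) x
  have h2 := DFunLike.congr_fun (bigPhi_comp_eIncl φ α β hc t ht) y
  simp only [MonoidHom.comp_apply] at h1 h2
  have h3 : SemidirectProduct.inl (φ := act φ α β hc t) x = SemidirectProduct.inl y := by
    rw [← h1, ← h2, hxy]
  exact SemidirectProduct.inl_injective h3

theorem eIncl_mem_iSup (n : PushoutI (kerFam φ α β hc)) :
    eIncl φ α β hc n ∈ ⨆ i, (MonoidHom.ker (α i)).map (PushoutI.of (φ := φ) i) := by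
  induction n using PushoutI.induction_on with
  | of i x =>
    rw [eIncl_of]
    exact Subgroup.mem_iSup_of_mem i ⟨x.1, x.2, rfl⟩
  | base y =>
    rw [eIncl_base, ← PushoutI.of_apply_eq_base φ (Classical.arbitrary ι)]
    refine Subgroup.mem_iSup_of_mem (Classical.arbitrary ι) ⟨_, ?_, rfl⟩
    show α _ (φ _ y.1) = 1
    rw [alpha_phi φ α β hc]
    exact y.2
  | mul x y hx hy =>
    rw [map_mul]
    exact mul_mem hx hy

variable (a : PushoutI φ →* Multiplicative ℤ)
  (ha : ∀ i, a.comp (PushoutI.of (φ := φ) i) = α i)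

include ha in
theorem a_of (i : ι) (g : G i) : a (PushoutI.of i g) = α i g := by
  have h := DFunLike.congr_fun (ha i) g
  simpa using h

include ha in
theorem a_base (h : A) : a (PushoutI.base φ h) = β h := by
  rw [← PushoutI.of_apply_eq_base φ (Classical.arbitrary ι),
    a_of (β := β) (hc := hc) (a := a) (ha := ha), alpha_phi φ α β hc]

include ha in
theorem a_eIncl (x : PushoutI (kerFam φ α β hc)) : a (eIncl φ α β hc x) = 1 := by
  induction x using PushoutI.induction_on with
  | of i x => rw [eIncl_of, a_of (β := β) (hc := hc) (a := a) (ha := ha)]; exact x.2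
  | base y => rw [eIncl_base, a_base φ α β hc a ha]; exact y.2
  | mul x y hx hy => rw [map_mul, map_mul, hx, hy, mul_one]

include ha in
theorem rightHom_bigPhi (g : PushoutI φ) :
    (bigPhi φ α β hc t ht g).right = a g := by
  induction g using PushoutI.induction_on with
  | of i x => rw [bigPhi_of, a_of (β := β) (hc := hc) (a := a) (ha := ha)]; rfl
  | base y => rw [bigPhi_base, a_base φ α β hc a ha]
  | mul x y hx hy => rw [map_mul, SemidirectProduct.mul_right, map_mul, hx, hy]

include ht ha in
theorem exists_eIncl (g : PushoutI φ) (hg : a g = 1) :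
    ∃ n, eIncl φ α β hc n = g := by
  refine ⟨(bigPhi φ α β hc t ht g).left, ?_⟩
  have h1 : (bigPhi φ α β hc t ht g).right = 1 := by
    rw [rightHom_bigPhi φ α β hc t ht a ha, hg]
  have h2 : SemidirectProduct.inl (bigPhi φ α β hc t ht g).left
      = bigPhi φ α β hc t ht g := by
    conv_rhs => rw [← SemidirectProduct.inl_left_mul_inr_right (bigPhi φ α β hc t ht g)]
    rw [h1, map_one, mul_one]
  have h3 : eIncl φ α β hc (bigPhi φ α β hc t ht g).left
      = bigTheta φ α β hc t (SemidirectProduct.inl (bigPhi φ α β hc t ht g).left) :=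
    (SemidirectProduct.lift_inl _ _ _ _).symm
  rw [h3, h2]
  exact DFunLike.congr_fun (bigTheta_comp_bigPhi φ α β hc t ht) g

include ht ha in
theorem master :
    (MonoidHom.ker a = ⨆ i, (MonoidHom.ker (α i)).map (PushoutI.of (φ := φ) i)) ∧
    Nonempty ((MonoidHom.ker a) ≃* PushoutI (kerFam φ α β hc)) := by
  constructor
  · apply le_antisymm
    · intro g hg
      obtain ⟨n, rfl⟩ := exists_eIncl φ α β hc t ht a ha g hg
      exact eIncl_mem_iSup φ α β hc n
    · refine iSup_le fun i => ?_
      rintro g ⟨y, hy, rfl⟩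
      show a (PushoutI.of i y) = 1
      rw [a_of (β := β) (hc := hc) (a := a) (ha := ha)]
      exact hy
  · let f : PushoutI (kerFam φ α β hc) →* MonoidHom.ker a :=
      (eIncl φ α β hc).codRestrict (MonoidHom.ker a)
        (fun x => a_eIncl φ α β hc a ha x)
    have hinj : Function.Injective f := fun x y hxy =>
      eIncl_injective φ α β hc t ht (congrArg Subtype.val hxy)
    have hsurj : Function.Surjective f := by
      rintro ⟨g, hg⟩
      obtain ⟨n, hn⟩ := exists_eIncl φ α β hc t ht a ha g hg
      exact ⟨n, Subtype.ext hn⟩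
    exact ⟨(MulEquiv.ofBijective f ⟨hinj, hsurj⟩).symm⟩

end SDP

end KerAmalgamAux


/-- Let `G₁ *_A G₂` be an amalgamated free product along injections `φ i : A → G i`
(`i : Bool`), and let `a : G₁ *_A G₂ → ℤ` be induced by homomorphisms `α i : G i → ℤ`
agreeing on `A`.  If the common restriction to `A` is surjective, then `ker a` is
generated by the kernels `ker (α i)` viewed inside the amalgam, and `ker a` is
isomorphic to the amalgamated product of the `ker (α i)` over the kernel
`K = ker (α₁ ∘ i₁) ≤ A`. -/
theorem ker_of_amalgam_hom_to_int {A : Type*} [Group A] (G : Bool → Type*)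
    [∀ i, Group (G i)] (φ : ∀ i, A →* G i) (hinj : ∀ i, Function.Injective (φ i))
    (α : ∀ i, G i →* Multiplicative ℤ)
    (hcompat : (α true).comp (φ true) = (α false).comp (φ false))
    (hsurjA : Function.Surjective ((α true).comp (φ true)))
    (a : PushoutI φ →* Multiplicative ℤ)
    (ha : ∀ i, a.comp (PushoutI.of (φ := φ) i) = α i) :
    (MonoidHom.ker a
      = ⨆ i, (MonoidHom.ker (α i)).map (PushoutI.of (φ := φ) i)) ∧
    Nonempty ((MonoidHom.ker a) ≃*
      PushoutI (fun i => MonoidHom.codRestrict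
        ((φ i).comp (MonoidHom.ker ((α true).comp (φ true))).subtype)
        (MonoidHom.ker (α i))
        (by
          intro x
          cases i with
          | true => exact x.2
          | false =>
            have hx : (α false).comp (φ false) x.1 = 1 := by rw [← hcompat]; exact x.2
            exact hx))) := by
  classical
  have hc : ∀ i, (α i).comp (φ i) = (α true).comp (φ true) := by
    intro i
    cases i
    · exact hcompat.symm
    · rfl
  obtain ⟨t, ht⟩ := hsurjA (Multiplicative.ofAdd 1)
  have hmain := KerAmalgamAux.master φ α ((α true).comp (φ true)) hc t ht a ha
  exact ⟨hmain.1, hmain.2⟩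
end

section
/- Let H₁, H₂ be groups and K a common subgroup included via j₁ : K → H₁ and j₂ : K → H₂, and let G₁ ≥ H₁, G₂ ≥ H₂ with a common subgroup A ≥ K compatible with the inclusions (i.e., i₁|_K = j₁ composed with H₁ ↪ G₁, similarly for i₂, and H₁ ∩ i₁(A) = j₁(K), H₂ ∩ i₂(A) = j₂(K) inside G₁, G₂ respectively). Then the natural homomorphism H₁ *_K H₂ → G₁ *_A G₂ is injective. -/
/-!
Write `x ∈ H₁ *_K H₂` in normal form `x = k · h₁ ⋯ hₙ`, where the letters `hⱼ` alternate
between the factors and lie outside the image of `K`. Since `Hᵢ ∩ φᵢ(A) = φᵢ(K)`, the same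
letters viewed in `Gᵢ` lie outside the image of `A`, so the image of `x` in `G₁ *_A G₂` is `k`
times a reduced word, which lies in the base group `A` only if the word is empty. Hence `x ↦ 1`
forces `n = 0` and then `k = 1`.
-/

open Monoid Function

theorem Subgroup.IsComplement.eq_one_of_mem_of_mem {G : Type*} [Group G] {S T : Set G}
    (hST : IsComplement S T) (hS : 1 ∈ S) (hT : 1 ∈ T) {g : G} (hgS : g ∈ S) (hgT : g ∈ T) :
    g = 1 := by
  have h := (hST.equiv_snd_eq_self_of_mem_of_one_mem hS hgT).symm.trans
    (hST.equiv_snd_eq_one_of_mem_of_one_mem hT hgS)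
  exact congrArg Subtype.val h

namespace Monoid.CoprodI.Word

variable {ι : Type*} {M N : ι → Type*} [∀ i, Monoid (M i)] [∀ i, Monoid (N i)]

def map (f : ∀ i, M i →* N i) (hf : ∀ i, Injective (f i)) (w : Word M) : Word N where
  toList := w.toList.map fun l => ⟨l.1, f l.1 l.2⟩
  ne_one l hl := by
    obtain ⟨⟨i, m⟩, hm, rfl⟩ := List.mem_map.1 hl
    exact fun h => w.ne_one _ hm ((hf i).eq_iff' (map_one _) |>.1 h)
  chain_ne :=
    List.isChain_map_of_isChain (fun l : Σ i, M i => (⟨l.1, f l.1 l.2⟩ : Σ i, N i))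
      (fun _ _ => id) w.chain_ne

variable (f : ∀ i, M i →* N i) (hf : ∀ i, Injective (f i))

@[simp]
theorem map_eq_empty_iff {w : Word M} : w.map f hf = empty ↔ w = empty := by
  simp only [Word.ext_iff, map, empty, List.map_eq_nil_iff]

theorem prod_map (w : Word M) :
    (w.map f hf).prod = lift (fun i => of.comp (f i)) w.prod := by
  simp only [prod, map, List.map_map, map_list_prod]
  rfl

end Monoid.CoprodI.Word

namespace Monoid.PushoutI

variable {ι : Type*} {K A : Type*} [Group K] [Group A] {H G : ι → Type*}
  [∀ i, Group (H i)] [∀ i, Group (G i)] {ψ : ∀ i, K →* H i} {φ : ∀ i, A →* G i}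

theorem NormalWord.reduced {d : Transversal φ} (w : NormalWord d) : Reduced φ w.toWord := by
  rintro ⟨i, g⟩ hg hgφ
  exact w.ne_one _ hg <| (d.compl i).eq_one_of_mem_of_mem (one_mem _) (d.one_mem i) hgφ
    (w.normalized i g hg)

theorem Reduced.map {f : ∀ i, H i →* G i} (hf : ∀ i, Injective (f i))
    (hrange : ∀ i h, f i h ∈ (φ i).range → h ∈ (ψ i).range) {w : CoprodI.Word H}
    (hw : Reduced ψ w) : Reduced φ (w.map f hf) := by
  rintro _ hg
  obtain ⟨⟨i, h⟩, hh, rfl⟩ := List.mem_map.1 hg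
  exact fun hφ => hw _ hh (hrange i h hφ)

variable (f : ∀ i, H i →* G i) (k : K →* A)

def map (hcomm : ∀ i, (f i).comp (ψ i) = (φ i).comp k) : PushoutI ψ →* PushoutI φ :=
  lift (fun i => (of i).comp (f i)) ((base φ).comp k) fun i => by
    rw [MonoidHom.comp_assoc, hcomm, ← MonoidHom.comp_assoc, of_comp_eq_base]

variable {f k} (hcomm : ∀ i, (f i).comp (ψ i) = (φ i).comp k)

@[simp]
theorem map_base (x : K) : map f k hcomm (base ψ x) = base φ (k x) :=
  lift_base _ _ _ x

theorem map_ofCoprodI_prod (hf : ∀ i, Injective (f i)) (w : CoprodI.Word H) :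
    map f k hcomm (ofCoprodI w.prod) = ofCoprodI (w.map f hf).prod := by
  rw [CoprodI.Word.prod_map, ← MonoidHom.comp_apply, ← MonoidHom.comp_apply]
  congr 1
  refine CoprodI.ext_hom _ _ fun i => ?_
  ext h
  simp [map]

theorem map_injective (hφ : ∀ i, Injective (φ i)) (hf : ∀ i, Injective (f i))
    (hk : Injective k) (hrange : ∀ i h, f i h ∈ (φ i).range → h ∈ (ψ i).range) :
    Injective (map f k hcomm) := by
  classical
  have hψ i : Injective (ψ i) := by
    refine Injective.of_comp (f := f i) ?_
    rw [← MonoidHom.coe_comp, hcomm]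
    exact (hφ i).comp hk
  obtain ⟨d⟩ := NormalWord.transversal_nonempty ψ hψ
  rw [injective_iff_map_eq_one]
  intro x hx
  obtain ⟨w, rfl⟩ : ∃ w : NormalWord d, w.prod = x :=
    ⟨NormalWord.equiv x, NormalWord.equiv.symm_apply_apply x⟩
  rw [NormalWord.prod, map_mul, map_base, map_ofCoprodI_prod hcomm hf] at hx
  have hmap : w.toWord.map f hf = .empty := by
    refine (w.reduced.map hf hrange).eq_empty_of_mem_range hφ ⟨(k w.head)⁻¹, ?_⟩
    rw [map_inv]
    exact inv_eq_of_mul_eq_one_right hx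
  have hword : w.toWord = .empty := (CoprodI.Word.map_eq_empty_iff f hf).1 hmap
  rw [hmap, CoprodI.Word.prod_empty, map_one, mul_one, ← map_one (base φ)] at hx
  have hhead : w.head = 1 := hk (by simpa using base_injective hφ hx)
  rw [NormalWord.prod, hword, hhead]
  simp

end Monoid.PushoutI

/-- Let `G₁ *_A G₂` be an amalgamated free product along injections `φ i : A → G i`
(`i : Bool`), let `H i ≤ G i` be subgroups and `K ≤ A` a subgroup with `φ i (K) ≤ H i`,
such that `H i ∩ φ i (A) = φ i (K)` for each `i`.  Then the natural homomorphism
`H₁ *_K H₂ → G₁ *_A G₂` is injective. -/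
theorem subamalgam_embeds {A : Type*} [Group A] (G : Bool → Type*)
    [∀ i, Group (G i)] (φ : ∀ i, A →* G i) (hinj : ∀ i, Function.Injective (φ i))
    (H : ∀ i, Subgroup (G i)) (K : Subgroup A)
    (hHK : ∀ i, ∀ k ∈ K, φ i k ∈ H i)
    (hinter : ∀ i, H i ⊓ (φ i).range = K.map (φ i)) :
    Function.Injective
      (PushoutI.lift
        (φ := fun i => MonoidHom.codRestrict ((φ i).comp K.subtype) (H i)
          (fun k => hHK i k.1 k.2))
        (fun i => (PushoutI.of (φ := φ) i).comp (H i).subtype)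
        ((PushoutI.base φ).comp K.subtype)
        (by
          intro i
          ext k
          exact DFunLike.congr_fun (PushoutI.of_comp_eq_base (φ := φ) i) k.1)) := by
  refine PushoutI.map_injective (f := fun i => (H i).subtype) (k := K.subtype)
    (fun i => rfl) hinj (fun i => Subtype.val_injective) Subtype.val_injective ?_
  intro i h hφ
  obtain ⟨k, hk, hkh⟩ : (h : G i) ∈ K.map (φ i) := hinter i ▸ ⟨h.2, hφ⟩
  exact ⟨⟨k, hk⟩, Subtype.ext hkh⟩
end
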